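/- Let k_min < K be indices, let q_l ∈ (0,1) for k_min ≤ l ≤ K−1, and let n_{k_min} ≥ n_{k_min+1} ≥ ⋯ ≥ n_K ≥ 0 be nonnegative reals with n_l > n_{l+1} for at least one l. Then the log-likelihood function 𝓛(ς) := Σ_{l=k_min}^{K−1} ( n_{l+1}·ς·log(q_l) + (n_l − n_{l+1})·log(1 − q_l^ς) ), defined for ς > 0, has second derivative 𝓛''(ς) = −Σ_{l=k_min}^{K−1} (n_l − n_{l+1})·(log q_l)²·q_l^ς / (1 − q_l^ς)² < 0; consequently 𝓛 is strictly concave on (0,∞) and its maximizer, if it exists, is the unique solution of 𝓛'(ς) = 0, where 𝓛'(ς) = Σ_{l=k_min}^{K−1} n_{l+1}·log(q_l) − Σ_{l=k_min}^{K−1} (n_l − n_{l+1})·log(q_l)·q_l^ς/(1 − q_l^ς). -/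

import Mathlib

open MeasureTheory ProbabilityTheory Filter Set
open scoped ENNReal Topology ProbabilityTheory

/-- The uniform probability measure on the circle of centre `c` and radius `ρ` in the
plane (identified with `ℂ`): the image of the normalized Lebesgue measure on `[0, 2π)`
under `θ ↦ c + ρ·e^{iθ}`. -/
noncomputable def uniformCircle (c : ℂ) (ρ : ℝ) : Measure ℂ :=
  (ENNReal.ofReal (2 * Real.pi))⁻¹ •
    (MeasureTheory.volume.restrict (Set.Ico (0 : ℝ) (2 * Real.pi))).map
      (fun θ : ℝ => c + (ρ : ℂ) * Complex.exp (θ * Complex.I))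

/-- A planar Brownian motion (with arbitrary initial distribution), realized as a
process with values in `ℂ ≅ ℝ²`: continuous paths, independent increments, and each
increment over `[s,t]` has as law the 2-dimensional centred Gaussian distribution of
variance `t - s` (i.e. the two real coordinates are independent `N(0, t-s)` variables). -/
structure IsPlanarBM {Ω : Type*} [MeasurableSpace Ω] (P : Measure Ω)
    (B : ℝ → Ω → ℂ) : Prop where
  meas : ∀ t : ℝ, Measurable (B t)
  cont : ∀ ω, Continuous fun t => B t ω
  indep_incr : ∀ (m : ℕ) (t : Fin (m + 1) → ℝ), Monotone t →
    iIndepFun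
      (fun i : Fin m => fun ω => B (t i.succ) ω - B (t i.castSucc) ω) P
  incr_law : ∀ s t : ℝ, 0 ≤ s → s ≤ t →
    P.map (fun ω => ((B t ω - B s ω).re, (B t ω - B s ω).im))
      = (gaussianReal 0 (Real.toNNReal (t - s))).prod
          (gaussianReal 0 (Real.toNNReal (t - s)))

/-- `hitTime B x ρ ω` is the first time `t ≥ 0` at which the path `B · ω` hits the
circle `∂𝓑(x, ρ)`. -/
noncomputable def hitTime {Ω : Type*} (B : ℝ → Ω → ℂ) (x : ℂ) (ρ : ℝ) (ω : Ω) : ℝ :=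
  sInf {t : ℝ | 0 ≤ t ∧ ‖B t ω - x‖ = ρ}

/-- `hitTimeAfter B x ρ σ ω` is the first time the path `B · ω` hits `∂𝓑(x, σ)`
after the hitting time of `∂𝓑(x, ρ)`. -/
noncomputable def hitTimeAfter {Ω : Type*} (B : ℝ → Ω → ℂ) (x : ℂ) (ρ σ : ℝ) (ω : Ω) : ℝ :=
  sInf {t : ℝ | hitTime B x ρ ω ≤ t ∧ ‖B t ω - x‖ = σ}

/-- The path of the process `B` run until time `T`, i.e. the set `B[0,T]`. -/
def pathUpTo {Ω : Type*} (B : ℝ → Ω → ℂ) (T : ℝ) (ω : Ω) : Set ℂ :=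
  (fun t => B t ω) '' Set.Icc 0 T

/-- The setting of the paper: `p` packets of respectively `n 1, …, n p` independent
planar Brownian motions, all started independently and uniformly on the unit circle. -/
structure BMSetup (p : ℕ) (n : Fin p → ℕ) where
  (Ω : Type)
  [mΩ : MeasurableSpace Ω]
  (P : Measure Ω)
  [isProb : IsProbabilityMeasure P]
  (B : (i : Fin p) → Fin (n i) → ℝ → Ω → ℂ)
  (isBM : ∀ i j, IsPlanarBM P (B i j))
  (start : ∀ i j, P.map (fun ω => B i j 0 ω) = uniformCircle 0 1)
  (indep : iIndepFun
      (fun (ij : Σ i : Fin p, Fin (n i)) ω => fun t => B ij.1 ij.2 t ω) P)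

attribute [instance] BMSetup.mΩ BMSetup.isProb

/-- The packet `𝔅^i(r)`: the union of the paths of the `i`-th packet, each run until
it first hits the circle of radius `r` around the origin. -/
noncomputable def BMSetup.packet {p : ℕ} {n : Fin p → ℕ} (S : BMSetup p n)
    (i : Fin p) (r : ℝ) (ω : S.Ω) : Set ℂ :=
  ⋃ j : Fin (n i), pathUpTo (S.B i j) (hitTime (S.B i j) 0 r ω) ω

/-- The non-intersection probability `ℙ{𝔅¹(r) ∩ ⋯ ∩ 𝔅^p(r) = ∅}`. -/
noncomputable def BMSetup.noMeetProb {p : ℕ} {n : Fin p → ℕ} (S : BMSetup p n) (r : ℝ) : ℝ :=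
  (S.P {ω | ⋂ i : Fin p, S.packet i r ω = ∅}).toReal

/-- `p` packets of respectively `n 1, …, n p` independent planar Brownian motions, all
started at the origin. Shifting by a configuration `x = (x^i_j)` produces the motions
"started at `x`" of the paper, with law `ℙ_x`. -/
structure BMSetup0 (p : ℕ) (n : Fin p → ℕ) where
  (Ω : Type)
  [mΩ : MeasurableSpace Ω]
  (P : Measure Ω)
  [isProb : IsProbabilityMeasure P]
  (B : (i : Fin p) → Fin (n i) → ℝ → Ω → ℂ)
  (isBM : ∀ i j, IsPlanarBM P (B i j))
  (start : ∀ i j ω, B i j 0 ω = 0)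
  (indep : iIndepFun
      (fun (ij : Σ i : Fin p, Fin (n i)) ω => fun t => B ij.1 ij.2 t ω) P)

attribute [instance] BMSetup0.mΩ BMSetup0.isProb

/-- The packet `𝔅^i(r)` for the motions started at the configuration `x` (i.e. the
shifted motions `x^i_j + B^i_j`), each path run until it first hits `∂𝓑(0,r)`. -/
noncomputable def BMSetup0.packetFrom {p : ℕ} {n : Fin p → ℕ} (S : BMSetup0 p n)
    (x : (i : Fin p) → Fin (n i) → ℂ) (i : Fin p) (r : ℝ) (ω : S.Ω) : Set ℂ :=
  ⋃ j : Fin (n i), pathUpTo (fun t ω => x i j + S.B i j t ω)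
      (hitTime (fun t ω => x i j + S.B i j t ω) 0 r ω) ω

/-- `ℙ_x{𝔅¹(r) ∩ ⋯ ∩ 𝔅^p(r) = ∅}`: the non-intersection probability for the motions
started at the configuration `x`. -/
noncomputable def BMSetup0.noMeetProbFrom {p : ℕ} {n : Fin p → ℕ} (S : BMSetup0 p n)
    (x : (i : Fin p) → Fin (n i) → ℂ) (r : ℝ) : ℝ :=
  (S.P {ω | ⋂ i : Fin p, S.packetFrom x i r ω = ∅}).toReal

/-- `a_r := sup_{|x^i_j| = 1} ℙ_x{𝔅¹(r) ∩ ⋯ ∩ 𝔅^p(r) = ∅}`, the supremum of the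
non-intersection probability over all starting configurations on the unit circle. -/
noncomputable def BMSetup0.supNoMeetProb {p : ℕ} {n : Fin p → ℕ} (S : BMSetup0 p n)
    (r : ℝ) : ℝ :=
  sSup {a : ℝ | ∃ x : (i : Fin p) → Fin (n i) → ℂ,
    (∀ i j, ‖x i j‖ = 1) ∧ a = S.noMeetProbFrom x r}

/-- `p` independent planar Brownian motions `W¹, …, W^p`, each started uniformly on the
circle of centre `0` and radius `ρ`. -/
structure WSetup (p : ℕ) (ρ : ℝ) where
  (Ω : Type)
  [mΩ : MeasurableSpace Ω]
  (P : Measure Ω)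
  [isProb : IsProbabilityMeasure P]
  (W : Fin p → ℝ → Ω → ℂ)
  (isBM : ∀ i, IsPlanarBM P (W i))
  (start : ∀ i, P.map (fun ω => W i 0 ω) = uniformCircle 0 ρ)
  (indep : iIndepFun (fun (i : Fin p) ω => fun t => W i t ω) P)

attribute [instance] WSetup.mΩ WSetup.isProb

/-!
Each summand of `𝓛''(ς)` is `-(n_l - n_{l+1}) (log q_l)² q_l^ς / (1 - q_l^ς)²`, which is `≤ 0` and
strictly negative at a level where the count strictly drops. Hence `𝓛'` is strictly decreasing
on `(0, ∞)`: this makes `𝓛` strictly concave, and a maximizer is a critical point, of which `𝓛'`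
can have at most one.
-/

section OpenConvex

variable {s : Set ℝ} {f f' : ℝ → ℝ}

theorem IsOpen.strictAntiOn_of_hasDerivAt_neg (hso : IsOpen s) (hs : Convex ℝ s)
    (hf : ∀ x ∈ s, HasDerivAt f (f' x) x) (hf' : ∀ x ∈ s, f' x < 0) : StrictAntiOn f s := by
  refine strictAntiOn_of_hasDerivWithinAt_neg (f' := f') hs
    (fun x hx => (hf x hx).continuousAt.continuousWithinAt) ?_ ?_ <;> rw [hso.interior_eq]
  · exact fun x hx => (hf x hx).hasDerivWithinAt
  · exact hf'

theorem IsOpen.strictConcaveOn_of_hasDerivAt_of_strictAntiOn (hso : IsOpen s) (hs : Convex ℝ s)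
    (hf : ∀ x ∈ s, HasDerivAt f (f' x) x) (hf' : StrictAntiOn f' s) : StrictConcaveOn ℝ s f :=
  StrictAntiOn.strictConcaveOn_of_deriv hs
    (fun x hx => (hf x hx).continuousAt.continuousWithinAt)
    (by rw [hso.interior_eq]; exact hf'.congr fun x hx => (hf x hx).deriv.symm)

end OpenConvex

section Rpow

variable {q ς : ℝ}

theorem Real.hasDerivAt_log_one_sub_rpow (hq : 0 < q) (h : q ^ ς ≠ 1) :
    HasDerivAt (fun t => Real.log (1 - q ^ t)) (-(Real.log q * q ^ ς / (1 - q ^ ς))) ς := by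
  have hsub : 1 - q ^ ς ≠ 0 := sub_ne_zero.mpr h.symm
  exact (((Real.hasStrictDerivAt_const_rpow hq ς).hasDerivAt.const_sub 1).log hsub).congr_deriv
    (by ring)

theorem Real.hasDerivAt_log_mul_rpow_div_one_sub_rpow (hq : 0 < q) (h : q ^ ς ≠ 1) :
    HasDerivAt (fun t => Real.log q * q ^ t / (1 - q ^ t))
      (Real.log q ^ 2 * q ^ ς / (1 - q ^ ς) ^ 2) ς := by
  have hsub : 1 - q ^ ς ≠ 0 := sub_ne_zero.mpr h.symm
  have hrpow := (Real.hasStrictDerivAt_const_rpow hq ς).hasDerivAt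
  exact ((hrpow.const_mul (Real.log q)).fun_div (hrpow.const_sub 1) hsub).congr_deriv (by ring)

theorem Real.rpow_ne_one_of_mem_Ioo (hq : q ∈ Ioo 0 1) (hς : 0 < ς) : q ^ ς ≠ 1 :=
  (Real.rpow_lt_one hq.1.le hq.2 hς).ne

theorem Real.log_sq_mul_rpow_div_one_sub_rpow_sq_pos (hq : q ∈ Ioo 0 1) (hς : 0 < ς) :
    0 < Real.log q ^ 2 * q ^ ς / (1 - q ^ ς) ^ 2 := by
  have hlog : Real.log q ≠ 0 := Real.log_ne_zero_of_pos_of_ne_one hq.1 hq.2.ne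
  have hsub : 1 - q ^ ς ≠ 0 := sub_ne_zero.mpr (Real.rpow_ne_one_of_mem_Ioo hq hς).symm
  positivity [Real.rpow_pos_of_pos hq.1 ς]

end Rpow

section LogLik

variable {ι : Type*} (s : Finset ι) (a b q : ι → ℝ)

/-- With `q l = L_l / L_{l+1}`, `a l = n_{l+1}` survivors and `b l = n_l - n_{l+1}` losses at
level `l`, this is the paper's log-likelihood `𝓛`. -/
noncomputable def logLik (ς : ℝ) : ℝ :=
  ∑ i ∈ s, (a i * ς * Real.log (q i) + b i * Real.log (1 - q i ^ ς))

noncomputable def logLikDeriv (ς : ℝ) : ℝ :=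
  (∑ i ∈ s, a i * Real.log (q i)) - ∑ i ∈ s, b i * (Real.log (q i) * q i ^ ς / (1 - q i ^ ς))

noncomputable def logLikDeriv2 (ς : ℝ) : ℝ :=
  -∑ i ∈ s, b i * (Real.log (q i) ^ 2 * q i ^ ς / (1 - q i ^ ς) ^ 2)

variable {s a b q} {ς : ℝ}

theorem hasDerivAt_logLik (hq : ∀ i ∈ s, q i ∈ Ioo 0 1) (hς : 0 < ς) :
    HasDerivAt (logLik s a b q) (logLikDeriv s a b q ς) ς := by
  rw [logLikDeriv, ← Finset.sum_sub_distrib]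
  refine HasDerivAt.fun_sum fun i hi => ?_
  have hlin : HasDerivAt (fun t => a i * t * Real.log (q i)) (a i * Real.log (q i)) ς := by
    simpa using ((hasDerivAt_id ς).const_mul (a i)).mul_const (Real.log (q i))
  exact (hlin.fun_add ((Real.hasDerivAt_log_one_sub_rpow (hq i hi).1
    (Real.rpow_ne_one_of_mem_Ioo (hq i hi) hς)).const_mul (b i))).congr_deriv (by ring)

theorem hasDerivAt_logLikDeriv (hq : ∀ i ∈ s, q i ∈ Ioo 0 1) (hς : 0 < ς) :
    HasDerivAt (logLikDeriv s a b q) (logLikDeriv2 s b q ς) ς := by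
  rw [logLikDeriv2, ← zero_sub]
  exact (hasDerivAt_const ς _).sub <| HasDerivAt.fun_sum fun i hi =>
    (Real.hasDerivAt_log_mul_rpow_div_one_sub_rpow (hq i hi).1
      (Real.rpow_ne_one_of_mem_Ioo (hq i hi) hς)).const_mul (b i)

theorem logLikDeriv2_neg (hq : ∀ i ∈ s, q i ∈ Ioo 0 1) (hς : 0 < ς) (hb : ∀ i ∈ s, 0 ≤ b i)
    (hb' : ∃ i ∈ s, 0 < b i) : logLikDeriv2 s b q ς < 0 := by
  have hterm (i) (hi : i ∈ s) :
      0 < Real.log (q i) ^ 2 * q i ^ ς / (1 - q i ^ ς) ^ 2 :=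
    Real.log_sq_mul_rpow_div_one_sub_rpow_sq_pos (hq i hi) hς
  obtain ⟨j, hj, hbj⟩ := hb'
  rw [logLikDeriv2, neg_lt_zero]
  exact Finset.sum_pos' (fun i hi => mul_nonneg (hb i hi) (hterm i hi).le)
    ⟨j, hj, mul_pos hbj (hterm j hj)⟩

end LogLik

theorem loglikelihood_strictly_concave_general (kmin K : ℕ)
    (q : ℕ → ℝ) (hq : ∀ l ∈ Finset.Ico kmin K, q l ∈ Set.Ioo (0 : ℝ) 1)
    (n : ℕ → ℝ) (hdec : ∀ l ∈ Finset.Ico kmin K, n (l + 1) ≤ n l)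
    (hstrict : ∃ l ∈ Finset.Ico kmin K, n (l + 1) < n l)
    (L D DD : ℝ → ℝ)
    (hL : ∀ ς : ℝ, L ς = ∑ l ∈ Finset.Ico kmin K,
      (n (l + 1) * ς * Real.log (q l) + (n l - n (l + 1)) * Real.log (1 - q l ^ ς)))
    (hD : ∀ ς : ℝ, D ς = (∑ l ∈ Finset.Ico kmin K, n (l + 1) * Real.log (q l)) -
      ∑ l ∈ Finset.Ico kmin K,
        (n l - n (l + 1)) * (Real.log (q l) * q l ^ ς / (1 - q l ^ ς)))
    (hDD : ∀ ς : ℝ, DD ς = -∑ l ∈ Finset.Ico kmin K,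
      (n l - n (l + 1)) * ((Real.log (q l)) ^ 2 * q l ^ ς / (1 - q l ^ ς) ^ 2)) :
    (∀ ς : ℝ, 0 < ς → HasDerivAt L (D ς) ς) ∧
    (∀ ς : ℝ, 0 < ς → HasDerivAt D (DD ς) ς ∧ DD ς < 0) ∧
    StrictConcaveOn ℝ (Set.Ioi 0) L ∧
    (∀ ς₀ : ℝ, 0 < ς₀ → IsMaxOn L (Set.Ioi 0) ς₀ →
      (D ς₀ = 0 ∧ ∀ ς₁ : ℝ, 0 < ς₁ → D ς₁ = 0 → ς₁ = ς₀)) := by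
  set a : ℕ → ℝ := fun l => n (l + 1)
  set b : ℕ → ℝ := fun l => n l - n (l + 1)
  obtain rfl : L = logLik (Finset.Ico kmin K) a b q := funext hL
  obtain rfl : D = logLikDeriv (Finset.Ico kmin K) a b q := funext hD
  obtain rfl : DD = logLikDeriv2 (Finset.Ico kmin K) b q := funext hDD
  have hL' (ς : ℝ) (hς : 0 < ς) := hasDerivAt_logLik (a := a) (b := b) hq hς
  have hneg (ς : ℝ) (hς : 0 < ς) : logLikDeriv2 (Finset.Ico kmin K) b q ς < 0 :=
    logLikDeriv2_neg hq hς (fun l hl => sub_nonneg.mpr (hdec l hl))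
      (hstrict.imp fun l ⟨hl, hlt⟩ => ⟨hl, sub_pos.mpr hlt⟩)
  have hanti : StrictAntiOn (logLikDeriv (Finset.Ico kmin K) a b q) (Ioi 0) :=
    isOpen_Ioi.strictAntiOn_of_hasDerivAt_neg (convex_Ioi 0)
      (fun ς hς => hasDerivAt_logLikDeriv hq hς) hneg
  refine ⟨hL', fun ς hς => ⟨hasDerivAt_logLikDeriv hq hς, hneg ς hς⟩,
    isOpen_Ioi.strictConcaveOn_of_hasDerivAt_of_strictAntiOn (convex_Ioi 0) hL' hanti,
    fun ς₀ hς₀ hmax => ?_⟩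
  have hcrit := (hmax.isLocalMax (Ioi_mem_nhds hς₀)).hasDerivAt_eq_zero (hL' ς₀ hς₀)
  exact ⟨hcrit, fun ς₁ hς₁ h₁ => hanti.injOn hς₁ hς₀ (h₁.trans hcrit.symm)⟩

/-- The log-likelihood analysis of the paper's Monte Carlo scheme: with
`q_l ∈ (0,1)` and nonincreasing nonnegative survival counts `n_l` (with at least one
strict decrease), the log-likelihood
`𝓛(ς) = Σ_l (n_{l+1}·ς·log q_l + (n_l − n_{l+1})·log(1 − q_l^ς))` has the stated
first and second derivatives on `(0,∞)`, the second derivative is negative, `𝓛` is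
strictly concave on `(0,∞)`, and a maximizer of `𝓛` on `(0,∞)`, if it exists, is the
unique solution of `𝓛'(ς) = 0`. -/
theorem loglikelihood_strictly_concave (kmin K : ℕ) (hkK : kmin < K)
    (q : ℕ → ℝ) (hq : ∀ l ∈ Finset.Ico kmin K, q l ∈ Set.Ioo (0 : ℝ) 1)
    (n : ℕ → ℝ) (hdec : ∀ l ∈ Finset.Ico kmin K, n (l + 1) ≤ n l)
    (hnonneg : ∀ l, kmin ≤ l → l ≤ K → 0 ≤ n l)
    (hstrict : ∃ l ∈ Finset.Ico kmin K, n (l + 1) < n l)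
    (L D DD : ℝ → ℝ)
    (hL : ∀ ς : ℝ, L ς = ∑ l ∈ Finset.Ico kmin K,
      (n (l + 1) * ς * Real.log (q l) + (n l - n (l + 1)) * Real.log (1 - q l ^ ς)))
    (hD : ∀ ς : ℝ, D ς = (∑ l ∈ Finset.Ico kmin K, n (l + 1) * Real.log (q l)) -
      ∑ l ∈ Finset.Ico kmin K,
        (n l - n (l + 1)) * (Real.log (q l) * q l ^ ς / (1 - q l ^ ς)))
    (hDD : ∀ ς : ℝ, DD ς = -∑ l ∈ Finset.Ico kmin K,
      (n l - n (l + 1)) * ((Real.log (q l)) ^ 2 * q l ^ ς / (1 - q l ^ ς) ^ 2)) :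
    (∀ ς : ℝ, 0 < ς → HasDerivAt L (D ς) ς) ∧
    (∀ ς : ℝ, 0 < ς → HasDerivAt D (DD ς) ς ∧ DD ς < 0) ∧
    StrictConcaveOn ℝ (Set.Ioi 0) L ∧
    (∀ ς₀ : ℝ, 0 < ς₀ → IsMaxOn L (Set.Ioi 0) ς₀ →
      (D ς₀ = 0 ∧ ∀ ς₁ : ℝ, 0 < ς₁ → D ς₁ = 0 → ς₁ = ς₀)) :=
  loglikelihood_strictly_concave_general kmin K q hq n hdec hstrict L D DD hL hD hDD
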